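/- arXiv:2507.09473 — 3 statements merged into one kernel-verified Lean document; each statement's English description precedes it below -/
import Mathlib

section
/- For any nonnegative reals x_1, ..., x_T, the sum ∑_{t=1}^T x_t / √(∑_{s=1}^t x_s) is at most 2·√(∑_{t=1}^T x_t), where terms with ∑_{s=1}^t x_s = 0 are interpreted as 0. -/
/-! With partial sums `S t`, the `t`-th term is `(S (t+1) - S t) / √(S (t+1))`, a right-endpoint
Riemann sum for `∫ ds / √s`, so it is at most `2 (√(S (t+1)) - √(S t))`; the bound telescopes.
The case `S (t+1) = 0` is harmless since then the term is `0 / 0 = 0`. -/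

open Finset Real

-- `b - a = (√b - √a)(√b + √a) ≤ 2√b (√b - √a)`.
lemma sub_div_sqrt_le_two_mul_sub_sqrt {a b : ℝ} (ha : 0 ≤ a) (hab : a ≤ b) :
    (b - a) / √b ≤ 2 * (√b - √a) := by
  rcases (ha.trans hab).eq_or_lt with hb | hb
  · subst hb
    obtain rfl : a = 0 := le_antisymm hab ha
    simp
  have hsqrt_le : √a ≤ √b := sqrt_le_sqrt hab
  rw [div_le_iff₀ (sqrt_pos.2 hb)]
  nlinarith [sq_sqrt ha, sq_sqrt (ha.trans hab), sqrt_nonneg a]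

lemma sum_sub_div_sqrt_le {f : ℕ → ℝ} (hf₀ : 0 ≤ f 0) (hf : Monotone f) (T : ℕ) :
    ∑ t ∈ range T, (f (t + 1) - f t) / √(f (t + 1)) ≤ 2 * (√(f T) - √(f 0)) := by
  calc ∑ t ∈ range T, (f (t + 1) - f t) / √(f (t + 1))
      ≤ ∑ t ∈ range T, 2 * (√(f (t + 1)) - √(f t)) :=
        sum_le_sum fun t _ =>
          sub_div_sqrt_le_two_mul_sub_sqrt (hf₀.trans (hf t.zero_le)) (hf t.le_succ)
    _ = 2 * (√(f T) - √(f 0)) := by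
        rw [← mul_sum, sum_range_sub (fun t => √(f t))]

/-- For nonnegative reals `x 0, ..., x (T-1)`,
`∑_t x t / √(∑_{s ≤ t} x s) ≤ 2 √(∑_t x t)` (with the convention `0 / 0 = 0`,
which is Lean's division by zero). -/
theorem sum_div_sqrt_le (T : ℕ) (x : ℕ → ℝ) (hx : ∀ t, 0 ≤ x t) :
    ∑ t ∈ Finset.range T, x t / Real.sqrt (∑ s ∈ Finset.range (t + 1), x s)
      ≤ 2 * Real.sqrt (∑ t ∈ Finset.range T, x t) := by
  have hmono : Monotone fun t => ∑ s ∈ range t, x s :=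
    monotone_nat_of_le_succ fun t => by simpa [sum_range_succ] using hx t
  simpa [sum_range_succ_sub_sum] using sum_sub_div_sqrt_le (by simp) hmono T
end

section
/- Let Ψ : 𝒳 → ℝ be a 1-strongly-convex function (w.r.t. a norm ‖·‖) with min_{x ∈ 𝒳} Ψ(x) = 0 on a convex set 𝒳, let f_1, ..., f_R : 𝒳 → ℝ be convex differentiable losses, and let η_1 ≥ η_2 ≥ ... ≥ η_R ≥ 0. Define x_r = argmin_{x ∈ 𝒳} (∑_{𝔯 < r} f_𝔯(x) + Ψ(x)/η_r). Then for every x* ∈ 𝒳, ∑_{r=1}^R (f_r(x_r) - f_r(x*)) ≤ Ψ(x*)/η_R + (1/2)·∑_{r=1}^R η_r·‖∇f_r(x_r)‖_*^2, where ‖·‖_* is the dual norm. -/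
/-!
The regularized objective `F r = ∑_{s < r} f s + Ψ / η r` is `(η r)⁻¹`-strongly convex and
minimized at `x r`, so it grows quadratically away from `x r`. Combined with the first-order
bound for the convex loss `f r` at `x r` and Young's inequality, this gives the one-round bound
`F r (x r) + f r (x r) ≤ F r y + f r y + η r / 2 * ‖f' r (x r)‖ ^ 2` for all `y ∈ 𝒳`.
As `η` is nonincreasing and `Ψ ≥ 0`, also `F r + f r ≤ F (r + 1)` on `𝒳`, so with `y = x (r + 1)`
the one-round bounds telescope; the last round is used with `y = xstar`.
-/

open Finset

theorem ConvexOn.sum {𝕜 E β ι : Type*} [Semiring 𝕜] [PartialOrder 𝕜] [AddCommMonoid E]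
    [AddCommMonoid β] [PartialOrder β] [IsOrderedAddMonoid β] [SMul 𝕜 E] [Module 𝕜 β]
    {s : Set E} (hs : Convex 𝕜 s) {t : Finset ι} {f : ι → E → β}
    (hf : ∀ i ∈ t, ConvexOn 𝕜 s (f i)) :
    ConvexOn 𝕜 s fun x => ∑ i ∈ t, f i x := by
  classical
  induction t using Finset.induction_on with
  | empty => simpa using convexOn_const 0 hs
  | insert i t hi ih =>
    simp_rw [Finset.sum_insert hi]
    exact (hf i (mem_insert_self i t)).add (ih fun j hj => hf j (mem_insert_of_mem hj))

section
variable {E : Type*} [NormedAddCommGroup E] [NormedSpace ℝ E] {s : Set E}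

theorem StrongConvexOn.div_const {F : E → ℝ} {m c : ℝ} (hF : StrongConvexOn s m F) (hc : 0 < c) :
    StrongConvexOn s (m / c) fun x => F x / c := by
  refine ⟨hF.1, fun x hx y hy a b ha hb hab => ?_⟩
  have h := div_le_div_of_nonneg_right (hF.2 hx hy ha hb hab) hc.le
  simp only [smul_eq_mul] at h ⊢
  exact h.trans_eq (by ring)

theorem ConvexOn.add_strongConvexOn {f F : E → ℝ} {m : ℝ} (hf : ConvexOn ℝ s f)
    (hF : StrongConvexOn s m F) : StrongConvexOn s m fun x => f x + F x := by
  have h := (uniformConvexOn_zero.2 hf).add hF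
  rwa [zero_add] at h

theorem ConvexOn.add_apply_sub_le_of_hasFDerivAt {f : E → ℝ} {f' : E →L[ℝ] ℝ} {x y : E}
    (hf : ConvexOn ℝ s f) (hx : x ∈ s) (hy : y ∈ s) (hf' : HasFDerivAt f f' x) :
    f x + f' (y - x) ≤ f y := by
  have hline : ConvexOn ℝ (AffineMap.lineMap x y ⁻¹' s) (f ∘ AffineMap.lineMap x y) :=
    hf.comp_affineMap _
  have hderiv : HasDerivAt (f ∘ AffineMap.lineMap x y) (f' (y - x)) (0 : ℝ) := by
    refine HasFDerivAt.comp_hasDerivAt _ ?_ AffineMap.hasDerivAt_lineMap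
    simpa using hf'
  have := hline.le_slope_of_hasDerivAt (by simpa using hx) (by simpa using hy) zero_lt_one hderiv
  simp only [slope_def_field, Function.comp_apply, AffineMap.lineMap_apply_one,
    AffineMap.lineMap_apply_zero, sub_zero, div_one, map_sub] at this ⊢
  linarith

theorem StrongConvexOn.apply_add_sq_norm_le_of_isMinOn {F : E → ℝ} {m : ℝ} {x y : E}
    (hF : StrongConvexOn s m F) (hmin : IsMinOn F s x) (hx : x ∈ s) (hy : y ∈ s) :
    F x + m / 2 * ‖y - x‖ ^ 2 ≤ F y := by
  have hseg : ∀ a ∈ Set.Ioo (0 : ℝ) 1, F x + (1 - a) * (m / 2 * ‖y - x‖ ^ 2) ≤ F y := by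
    rintro a ⟨ha₀, ha₁⟩
    have hconv := hF.2 hx hy (sub_nonneg.2 ha₁.le) ha₀.le (sub_add_cancel 1 a)
    have hle : F x ≤ F _ := hmin (hF.1 hx hy (sub_nonneg.2 ha₁.le) ha₀.le (sub_add_cancel 1 a))
    simp only [smul_eq_mul, norm_sub_rev x y] at hconv
    refine le_of_mul_le_mul_left ?_ ha₀
    linarith
  have hlim : Filter.Tendsto (fun a : ℝ => F x + (1 - a) * (m / 2 * ‖y - x‖ ^ 2))
      (nhdsWithin 0 (Set.Ioi 0)) (nhds (F x + m / 2 * ‖y - x‖ ^ 2)) :=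
    tendsto_nhdsWithin_of_tendsto_nhds ((by fun_prop : Continuous _).tendsto' 0 _ (by simp))
  exact le_of_tendsto hlim (Filter.eventually_of_mem (Ioo_mem_nhdsGT zero_lt_one) hseg)

theorem IsMinOn.add_le_add_of_strongConvexOn {F f : E → ℝ} {f' : E →L[ℝ] ℝ} {η : ℝ} {x z : E}
    (hmin : IsMinOn F s x) (hF : StrongConvexOn s η⁻¹ F) (hη : 0 < η) (hf : ConvexOn ℝ s f)
    (hf' : HasFDerivAt f f' x) (hx : x ∈ s) (hz : z ∈ s) :
    F x + f x ≤ F z + f z + η / 2 * ‖f'‖ ^ 2 := by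
  have hgrowth := hF.apply_add_sq_norm_le_of_isMinOn hmin hx hz
  have hsubgrad := hf.add_apply_sub_le_of_hasFDerivAt hx hz hf'
  have hdual : -(‖f'‖ * ‖z - x‖) ≤ f' (z - x) :=
    neg_le_of_abs_le (by simpa using f'.le_opNorm (z - x))
  have hyoung : ‖f'‖ * ‖z - x‖ ≤ η⁻¹ / 2 * ‖z - x‖ ^ 2 + η / 2 * ‖f'‖ ^ 2 := by
    have : 0 ≤ (‖z - x‖ - η * ‖f'‖) ^ 2 / (2 * η) := by positivity
    calc ‖f'‖ * ‖z - x‖ ≤ ‖f'‖ * ‖z - x‖ + (‖z - x‖ - η * ‖f'‖) ^ 2 / (2 * η) := by linarith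
      _ = _ := by field_simp; ring
  linarith

end

theorem Fin.sum_le_of_add_le_succ {n : ℕ} {u ℓ : Fin (n + 1) → ℝ} {B : ℝ} (h₀ : 0 ≤ u 0)
    (hsucc : ∀ i : Fin n, u i.castSucc + ℓ i.castSucc ≤ u i.succ)
    (hlast : u (Fin.last n) + ℓ (Fin.last n) ≤ B) :
    ∑ i, ℓ i ≤ B := by
  have hsum := Finset.sum_le_sum fun i (_ : i ∈ univ) => hsucc i
  rw [Finset.sum_add_distrib] at hsum
  have hu := (Fin.sum_univ_castSucc u).symm.trans (Fin.sum_univ_succ u)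
  rw [Fin.sum_univ_castSucc ℓ]
  linarith

theorem Fin.sum_Iio_succ {M : Type*} [AddCommMonoid M] {n : ℕ} (g : Fin (n + 1) → M) (i : Fin n) :
    ∑ s ∈ Iio i.succ, g s = ∑ s ∈ Iio i.castSucc, g s + g i.castSucc := by
  have : Iio i.succ = Iic i.castSucc := by ext; simp [Fin.le_castSucc_iff]
  rw [this, Iic_eq_cons_Iio, Finset.sum_cons, add_comm]

theorem Fin.sum_Iio_last_add {M : Type*} [AddCommMonoid M] {n : ℕ} (g : Fin (n + 1) → M) :
    ∑ s ∈ Iio (Fin.last n), g s + g (Fin.last n) = ∑ s, g s := by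
  rw [Fin.sum_univ_castSucc, Fin.Iio_last_eq_map, sum_map]
  rfl

section Objective

variable {ι E : Type*} [Preorder ι] [LocallyFiniteOrderBot ι]

noncomputable def ftrlObjective (f : ι → E → ℝ) (Ψ : E → ℝ) (η : ι → ℝ) (r : ι) (y : E) : ℝ :=
  ∑ s ∈ Iio r, f s y + Ψ y / η r

theorem ftrlObjective_of_isMin {f : ι → E → ℝ} {Ψ : E → ℝ} {η : ι → ℝ} {r : ι} (hr : IsMin r)
    (y : E) : ftrlObjective f Ψ η r y = Ψ y / η r := by
  simp [ftrlObjective, Finset.Iio_eq_empty.2 hr]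

theorem strongConvexOn_ftrlObjective [NormedAddCommGroup E] [NormedSpace ℝ E] {𝒳 : Set E}
    {f : ι → E → ℝ} {Ψ : E → ℝ} {η : ι → ℝ} {r : ι} (h𝒳 : Convex ℝ 𝒳)
    (hf : ∀ s, ConvexOn ℝ 𝒳 (f s)) (hΨ : StrongConvexOn 𝒳 1 Ψ) (hη : 0 < η r) :
    StrongConvexOn 𝒳 (η r)⁻¹ (ftrlObjective f Ψ η r) := by
  have hΨη := hΨ.div_const hη
  rw [one_div] at hΨη
  exact (ConvexOn.sum h𝒳 fun s _ => hf s).add_strongConvexOn hΨη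

end Objective

theorem ftrlObjective_castSucc_add_le_succ {E : Type*} {n : ℕ} {f : Fin (n + 1) → E → ℝ}
    {Ψ : E → ℝ} {η : Fin (n + 1) → ℝ} {i : Fin n} {y : E} (hΨ : 0 ≤ Ψ y)
    (hη : 0 < η i.succ) (hη_anti : η i.succ ≤ η i.castSucc) :
    ftrlObjective f Ψ η i.castSucc y + f i.castSucc y ≤ ftrlObjective f Ψ η i.succ y := by
  have : Ψ y / η i.castSucc ≤ Ψ y / η i.succ := div_le_div_of_nonneg_left hΨ hη hη_anti
  rw [ftrlObjective, ftrlObjective, Fin.sum_Iio_succ]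
  linarith

theorem ftrlObjective_last_add {E : Type*} {n : ℕ} (f : Fin (n + 1) → E → ℝ) (Ψ : E → ℝ)
    (η : Fin (n + 1) → ℝ) (y : E) :
    ftrlObjective f Ψ η (Fin.last n) y + f (Fin.last n) y
      = ∑ s, f s y + Ψ y / η (Fin.last n) := by
  rw [ftrlObjective, ← Fin.sum_Iio_last_add]
  ring

/-- Follow-the-Regularized-Leader (FTRL) regret guarantee: if `Ψ` is `1`-strongly convex
on the convex set `𝒳` with minimum value `0`, the losses `f r` are convex and
differentiable, the learning rates `η` are positive and nonincreasing, and
`x r = argmin_{y ∈ 𝒳} (∑_{s < r} f s y + Ψ y / η r)`, then for every `xstar ∈ 𝒳`,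
`∑_r (f r (x r) - f r xstar) ≤ Ψ xstar / η (R-1) + (1/2) ∑_r η r * ‖∇ f r (x r)‖²`,
where the gradient norm is the dual (operator) norm. -/
theorem ftrl_regret
    {E : Type*} [NormedAddCommGroup E] [NormedSpace ℝ E]
    (𝒳 : Set E) (h𝒳 : Convex ℝ 𝒳)
    (Ψ : E → ℝ) (hΨ : StrongConvexOn 𝒳 1 Ψ)
    (hΨ0 : ∀ y ∈ 𝒳, 0 ≤ Ψ y)
    (R : ℕ) (hR : 0 < R)
    (f : Fin R → E → ℝ) (hf : ∀ r, ConvexOn ℝ 𝒳 (f r))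
    (f' : Fin R → E → (E →L[ℝ] ℝ))
    (hf' : ∀ r x, x ∈ 𝒳 → HasFDerivAt (f r) (f' r x) x)
    (η : Fin R → ℝ) (hηpos : ∀ r, 0 < η r)
    (hηmono : ∀ r r' : Fin R, r ≤ r' → η r' ≤ η r)
    (x : Fin R → E) (hx𝒳 : ∀ r, x r ∈ 𝒳)
    (hx : ∀ r, ∀ y ∈ 𝒳,
      (∑ s ∈ Finset.univ.filter (· < r), f s (x r)) + Ψ (x r) / η r
        ≤ (∑ s ∈ Finset.univ.filter (· < r), f s y) + Ψ y / η r) :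
    ∀ xstar ∈ 𝒳,
      ∑ r, (f r (x r) - f r xstar)
        ≤ Ψ xstar / η ⟨R - 1, by omega⟩
          + (1 / 2) * ∑ r, η r * ‖f' r (x r)‖ ^ 2 := by
  intro z hz
  obtain ⟨n, rfl⟩ := Nat.exists_eq_add_one_of_ne_zero hR.ne'
  change _ ≤ Ψ z / η (Fin.last n) + _
  simp only [filter_gt_eq_Iio] at hx
  have hround : ∀ r, ∀ y ∈ 𝒳, ftrlObjective f Ψ η r (x r) + f r (x r)
      ≤ ftrlObjective f Ψ η r y + f r y + η r / 2 * ‖f' r (x r)‖ ^ 2 := fun r y hy =>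
    IsMinOn.add_le_add_of_strongConvexOn (hx r) (strongConvexOn_ftrlObjective h𝒳 hf hΨ (hηpos r))
      (hηpos r) (hf r) (hf' r _ (hx𝒳 r)) (hx𝒳 r) hy
  have htelescope : ∑ r, (f r (x r) - η r / 2 * ‖f' r (x r)‖ ^ 2)
      ≤ ∑ r, f r z + Ψ z / η (Fin.last n) := by
    refine Fin.sum_le_of_add_le_succ (u := fun r => ftrlObjective f Ψ η r (x r)) ?_ (fun i => ?_) ?_
    · rw [ftrlObjective_of_isMin (isMin_iff_eq_bot.2 rfl : IsMin (0 : Fin (n + 1)))]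
      exact div_nonneg (hΨ0 _ (hx𝒳 0)) (hηpos 0).le
    · have := ftrlObjective_castSucc_add_le_succ (f := f) (hΨ0 _ (hx𝒳 i.succ)) (hηpos i.succ)
        (hηmono _ _ Fin.castSucc_lt_succ.le)
      linarith [hround i.castSucc _ (hx𝒳 i.succ)]
    · linarith [hround (Fin.last n) z hz, ftrlObjective_last_add f Ψ η z]
  have hhalf : (1 / 2) * ∑ r, η r * ‖f' r (x r)‖ ^ 2 = ∑ r, η r / 2 * ‖f' r (x r)‖ ^ 2 := by
    rw [mul_sum]
    exact sum_congr rfl fun r _ => by ring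
  simp only [sum_sub_distrib] at htelescope ⊢
  linarith
end

section
/- Let x_1, ..., x_n be independent mean-zero random vectors in ℝ^d with ‖x_i‖₂ ≤ √d almost surely. Let z = (1/n)·∑_{i=1}^n x_i. Then for every 0 < ε < √d, Pr{‖z‖₂ ≥ ε} ≤ exp(-n·ε²/(8d) + 1/4). -/
/-!
The norm is 1-Lipschitz, and a 1-Lipschitz function of a sum of independent vectors with
`‖x i‖ ≤ R i` is sub-Gaussian around its mean with variance proxy `∑ R i ^ 2`: adding one
summand `y` to a partial sum `u` keeps `f (u + y)` within `R` of `f u`, so Hoeffding's lemma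
bounds the mgf conditionally on `u`, and averaging `f (u + ·)` over `y` gives again a 1-Lipschitz
function of `u`, so the argument iterates. For mean-zero summands independence kills the cross
terms of `E ‖∑ x i‖²`, whence `E ‖∑ x i‖ ≤ √(n d)`, and the Chernoff bound for the deviation
`n ε - E ‖∑ x i‖ ≥ n ε - √(n d)` gives the claim.
-/

open MeasureTheory ProbabilityTheory Real
open scoped NNReal InnerProductSpace

section Lipschitz

variable {E : Type*} [NormedAddCommGroup E]

theorem LipschitzWith.abs_comp_add_sub_le {f : E → ℝ} (hf : LipschitzWith 1 f) (x y : E) :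
    |f (x + y) - f x| ≤ ‖y‖ := by
  simpa [← Real.dist_eq] using hf.dist_le_mul (x + y) x

variable [MeasurableSpace E] {ρ : Measure E} [IsProbabilityMeasure ρ]

theorem LipschitzWith.integral_comp_add {K : ℝ≥0} {f : E → ℝ} (hf : LipschitzWith K f)
    (hint : ∀ x, Integrable (fun y ↦ f (x + y)) ρ) :
    LipschitzWith K fun x ↦ ∫ y, f (x + y) ∂ρ := by
  refine LipschitzWith.of_dist_le_mul fun x x' ↦ ?_
  rw [dist_eq_norm, ← integral_sub (hint x) (hint x')]
  calc _ ≤ K * dist x x' * ρ.real Set.univ :=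
        norm_integral_le_of_norm_le_const <| ae_of_all _ fun y ↦ by
          simpa [← dist_eq_norm] using hf.dist_le_mul (x + y) (x' + y)
    _ = K * dist x x' := by simp

theorem LipschitzWith.abs_comp_add_sub_integral_le {R : ℝ≥0} (hρ : ∀ᵐ z ∂ρ, ‖z‖ ≤ R)
    {f : E → ℝ} (hf : LipschitzWith 1 f) (hint : ∀ x, Integrable (fun z ↦ f (x + z)) ρ)
    (x : E) {y : E} (hy : ‖y‖ ≤ R) :
    |f (x + y) - ∫ z, f (x + z) ∂ρ| ≤ 2 * R := by
  have h : f (x + y) - ∫ z, f (x + z) ∂ρ = ∫ z, (f (x + y) - f (x + z)) ∂ρ := by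
    simp [integral_sub (integrable_const _) (hint x)]
  rw [h, ← Real.norm_eq_abs]
  calc _ ≤ 2 * R * ρ.real Set.univ := norm_integral_le_of_norm_le_const <| by
        filter_upwards [hρ] with z hz
        have := abs_sub_le (f (x + y)) (f x) (f (x + z))
        rw [abs_sub_comm (f x)] at this
        rw [Real.norm_eq_abs]
        linarith [hf.abs_comp_add_sub_le x y, hf.abs_comp_add_sub_le x z]
    _ = 2 * R := by simp

variable [OpensMeasurableSpace E] [MeasurableAdd E]

theorem hasSubgaussianMGF_comp_add_sub_integral {R : ℝ≥0} (hρ : ∀ᵐ y ∂ρ, ‖y‖ ≤ R)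
    {f : E → ℝ} (hf : LipschitzWith 1 f) (x : E) :
    HasSubgaussianMGF (fun y ↦ f (x + y) - ∫ z, f (x + z) ∂ρ) (R ^ 2) ρ := by
  have hmem : ∀ᵐ y ∂ρ, f (x + y) ∈ Set.Icc (f x - R) (f x + R) := by
    filter_upwards [hρ] with y hy
    have := (hf.abs_comp_add_sub_le x y).trans hy
    rw [abs_le] at this
    constructor <;> linarith
  convert hasSubgaussianMGF_of_mem_Icc (X := fun y ↦ f (x + y))
    (hf.continuous.measurable.comp (measurable_const_add x)).aemeasurable hmem using 1
  rw [show f x + R - (f x - R) = 2 * R by ring]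
  ext
  simp

end Lipschitz

theorem ProbabilityTheory.HasSubgaussianMGF.conv {M : Type*} [AddMonoid M] [MeasurableSpace M]
    [MeasurableAdd₂ M] {ν ρ : Measure M} [IsFiniteMeasure ν] [IsFiniteMeasure ρ]
    {φ ψ : M → ℝ} {c c' : ℝ≥0} {B : ℝ} (hφ : Measurable φ) (hψ : HasSubgaussianMGF ψ c ν)
    (hφψ : ∀ x, HasSubgaussianMGF (fun y ↦ φ (x + y) - ψ x) c' ρ)
    (hB : ∀ᵐ y ∂ρ, ∀ x, |φ (x + y) - ψ x| ≤ B) :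
    HasSubgaussianMGF φ (c + c') (ν ∗ ρ) := by
  have hint (t : ℝ) : Integrable (fun z ↦ exp (t * φ z)) (ν ∗ ρ) := by
    have hmeas : Measurable fun z ↦ exp (t * φ z) := by fun_prop
    rw [Measure.conv, integrable_map_measure hmeas.aestronglyMeasurable
      measurable_add.aemeasurable]
    refine (((hψ.integrable_exp_mul t).comp_fst ρ).const_mul (exp (|t| * B))).mono'
      (hmeas.comp measurable_add).aestronglyMeasurable ?_
    filter_upwards [Measure.quasiMeasurePreserving_snd.ae hB] with p hp
    rw [Function.comp_apply, norm_of_nonneg (exp_nonneg _), ← exp_add, exp_le_exp]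
    have h1 := le_abs_self (t * (φ (p.1 + p.2) - ψ p.1))
    rw [abs_mul] at h1
    nlinarith [mul_le_mul_of_nonneg_left (hp p.1) (abs_nonneg t)]
  refine ⟨hint, fun t ↦ ?_⟩
  rw [mgf, integral_conv (hint t)]
  calc ∫ x, ∫ y, exp (t * φ (x + y)) ∂ρ ∂ν
      = ∫ x, exp (t * ψ x) * mgf (fun y ↦ φ (x + y) - ψ x) ρ t ∂ν := by
        congr with x
        rw [mgf, ← integral_const_mul]
        congr with y
        rw [← exp_add]
        ring_nf
    _ ≤ ∫ x, exp (t * ψ x) * exp (c' * t ^ 2 / 2) ∂ν :=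
        integral_mono_of_nonneg (ae_of_all _ fun x ↦ mul_nonneg (exp_nonneg _) mgf_nonneg)
          ((hψ.integrable_exp_mul t).mul_const _)
          (ae_of_all _ fun x ↦ mul_le_mul_of_nonneg_left ((hφψ x).mgf_le t) (exp_nonneg _))
    _ = mgf ψ ν t * exp (c' * t ^ 2 / 2) := by rw [integral_mul_const, mgf]
    _ ≤ exp (c * t ^ 2 / 2) * exp (c' * t ^ 2 / 2) :=
        mul_le_mul_of_nonneg_right (hψ.mgf_le t) (exp_nonneg _)
    _ = exp ((c + c' : ℝ≥0) * t ^ 2 / 2) := by rw [← exp_add]; push_cast; ring_nf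

section LipschitzConcentration

variable {E : Type*} [NormedAddCommGroup E] [MeasurableSpace E] [OpensMeasurableSpace E]

def HasLipschitzConcentration (ν : Measure E) (c : ℝ≥0) : Prop :=
  ∀ f : E → ℝ, LipschitzWith 1 f → HasSubgaussianMGF (fun x ↦ f x - ∫ y, f y ∂ν) c ν

theorem hasLipschitzConcentration_dirac (x : E) :
    HasLipschitzConcentration (Measure.dirac x) 0 := by
  intro f hf
  refine HasSubgaussianMGF.fun_zero.congr ?_
  rw [Filter.EventuallyEq, ae_dirac_eq, Filter.eventually_pure, integral_dirac, sub_self]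

variable [MeasurableAdd₂ E]

theorem HasLipschitzConcentration.conv {ν ρ : Measure E} [IsProbabilityMeasure ν]
    [IsProbabilityMeasure ρ] {c R : ℝ≥0} (hν : HasLipschitzConcentration ν c)
    (hρ : ∀ᵐ y ∂ρ, ‖y‖ ≤ R) : HasLipschitzConcentration (ν ∗ ρ) (c + R ^ 2) := by
  intro f hf
  set g : E → ℝ := fun x ↦ ∫ y, f (x + y) ∂ρ
  have hfg := hasSubgaussianMGF_comp_add_sub_integral hρ hf
  have hint (x : E) : Integrable (fun y ↦ f (x + y)) ρ :=
    ((hfg x).integrable.add (integrable_const (g x))).congr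
      (ae_of_all _ fun _ ↦ sub_add_cancel _ _)
  have key : HasSubgaussianMGF (fun z ↦ f z - ∫ x, g x ∂ν) (c + R ^ 2) (ν ∗ ρ) := by
    refine HasSubgaussianMGF.conv (ψ := fun x ↦ g x - ∫ x, g x ∂ν) (B := 2 * R)
      (hf.continuous.measurable.sub measurable_const)
      (hν g (hf.integral_comp_add hint)) (fun x ↦ by simpa using hfg x) ?_
    filter_upwards [hρ] with y hy x
    simpa using hf.abs_comp_add_sub_integral_le hρ hint x hy
  have hmean : ∫ z, f z ∂(ν ∗ ρ) = ∫ x, g x ∂ν :=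
    integral_conv <| (key.integrable.add (integrable_const (∫ x, g x ∂ν))).congr
      (ae_of_all _ fun _ ↦ sub_add_cancel _ _)
  rwa [hmean]

variable {Ω ι : Type*} [MeasurableSpace Ω] {μ : Measure Ω} [IsProbabilityMeasure μ]
  {X : ι → Ω → E} {R : ι → ℝ≥0}

theorem hasLipschitzConcentration_map_sum (hX : ∀ i, Measurable (X i))
    (hindep : iIndepFun X μ) (hR : ∀ i, ∀ᵐ ω ∂μ, ‖X i ω‖ ≤ R i) (s : Finset ι) :
    HasLipschitzConcentration (μ.map (∑ i ∈ s, X i)) (∑ i ∈ s, R i ^ 2) := by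
  classical
  induction s using Finset.induction_on with
  | empty => simpa [Pi.zero_def, Measure.map_const] using hasLipschitzConcentration_dirac (0 : E)
  | insert j s hj ih =>
    have hS : Measurable (∑ i ∈ s, X i) :=
      Finset.sum_induction _ Measurable (fun _ _ ↦ Measurable.add) measurable_zero fun i _ ↦ hX i
    have := Measure.isProbabilityMeasure_map (μ := μ) hS.aemeasurable
    have := Measure.isProbabilityMeasure_map (μ := μ) (hX j).aemeasurable
    rw [Finset.sum_insert hj, Finset.sum_insert hj, add_comm (X j), add_comm (R j ^ 2),
      (hindep.indepFun_finsetSum_of_notMem hX hj).map_add_eq_map_conv_map hS (hX j)]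
    exact ih.conv <| (ae_map_iff (hX j).aemeasurable
      (measurableSet_le measurable_norm measurable_const)).2 (hR j)

theorem measureReal_norm_sum_ge_le (hX : ∀ i, Measurable (X i)) (hindep : iIndepFun X μ)
    (hR : ∀ i, ∀ᵐ ω ∂μ, ‖X i ω‖ ≤ R i) (s : Finset ι) {t : ℝ} (ht : 0 ≤ t) :
    μ.real {ω | ∫ ω', ‖∑ i ∈ s, X i ω'‖ ∂μ + t ≤ ‖∑ i ∈ s, X i ω‖}
      ≤ exp (-t ^ 2 / (2 * ∑ i ∈ s, (R i : ℝ) ^ 2)) := by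
  have hS : Measurable (∑ i ∈ s, X i) :=
    Finset.sum_induction _ Measurable (fun _ _ ↦ Measurable.add) measurable_zero fun i _ ↦ hX i
  have h := (hasLipschitzConcentration_map_sum hX hindep hR s _ lipschitzWith_one_norm).of_map
    hS.aemeasurable
  rw [integral_map hS.aemeasurable continuous_norm.aestronglyMeasurable] at h
  convert h.measure_ge_le ht using 3
  · ext ω
    simp [Finset.sum_apply, le_sub_iff_add_le']
  · push_cast
    rfl

end LipschitzConcentration

section SecondMoment

variable {Ω ι E : Type*} [MeasurableSpace Ω] {μ : Measure Ω} [NormedAddCommGroup E]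
  [InnerProductSpace ℝ E] [CompleteSpace E] [MeasurableSpace E] [BorelSpace E]
  {X : ι → Ω → E}

theorem integral_norm_sum_sq [IsFiniteMeasure μ] (hX : ∀ i, MemLp (X i) 2 μ)
    (hindep : Pairwise fun i j ↦ IndepFun (X i) (X j) μ) (hmean : ∀ i, μ[X i] = 0)
    (s : Finset ι) :
    ∫ ω, ‖∑ i ∈ s, X i ω‖ ^ 2 ∂μ = ∑ i ∈ s, ∫ ω, ‖X i ω‖ ^ 2 ∂μ := by
  have hint (i j : ι) : Integrable (fun ω ↦ ⟪X i ω, X j ω⟫_ℝ) μ := by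
    rcases eq_or_ne i j with rfl | hij
    · simpa only [real_inner_self_eq_norm_sq] using (hX i).integrable_norm_pow two_ne_zero
    · exact (hindep hij).integrable_bilin ((hX i).integrable one_le_two)
        ((hX j).integrable one_le_two) (innerSL ℝ : E →L[ℝ] E →L[ℝ] ℝ)
  have hcross {i j : ι} (hij : i ≠ j) : ∫ ω, ⟪X i ω, X j ω⟫_ℝ ∂μ = 0 := by
    have h := (hindep hij).integral_bilin ((hX i).integrable one_le_two)
      ((hX j).integrable one_le_two) (innerSL ℝ : E →L[ℝ] E →L[ℝ] ℝ)
    rw [hmean, hmean, map_zero] at h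
    exact h
  simp_rw [← real_inner_self_eq_norm_sq, sum_inner, inner_sum]
  rw [integral_finsetSum _ fun i _ ↦ integrable_finsetSum _ fun j _ ↦ hint i j]
  refine Finset.sum_congr rfl fun i hi ↦ ?_
  rw [integral_finsetSum _ fun j _ ↦ hint i j,
    Finset.sum_eq_single_of_mem i hi fun j _ hji ↦ hcross hji.symm]

theorem integral_norm_sum_le_sqrt [IsProbabilityMeasure μ] (hX : ∀ i, MemLp (X i) 2 μ)
    (hindep : Pairwise fun i j ↦ IndepFun (X i) (X j) μ) (hmean : ∀ i, μ[X i] = 0)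
    (s : Finset ι) :
    ∫ ω, ‖∑ i ∈ s, X i ω‖ ∂μ ≤ √(∑ i ∈ s, ∫ ω, ‖X i ω‖ ^ 2 ∂μ) := by
  rw [← integral_norm_sum_sq hX hindep hmean s]
  refine Real.le_sqrt_of_sq_le ?_
  have hS : MemLp (fun ω ↦ ‖∑ i ∈ s, X i ω‖) 2 μ :=
    (memLp_finsetSum s fun i _ ↦ hX i).norm
  have := variance_nonneg (fun ω ↦ ‖∑ i ∈ s, X i ω‖) μ
  rw [variance_eq_sub hS] at this
  simpa [sub_nonneg] using this

theorem integral_norm_sum_le_sqrt_card_mul [IsProbabilityMeasure μ]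
    (hX : ∀ i, AEStronglyMeasurable (X i) μ)
    (hindep : Pairwise fun i j ↦ IndepFun (X i) (X j) μ) (hmean : ∀ i, μ[X i] = 0) {C : ℝ}
    (hC : ∀ i, ∀ᵐ ω ∂μ, ‖X i ω‖ ≤ C) (s : Finset ι) :
    ∫ ω, ‖∑ i ∈ s, X i ω‖ ∂μ ≤ √(s.card * C ^ 2) := by
  refine (integral_norm_sum_le_sqrt (fun i ↦ MemLp.of_bound (hX i) C (hC i)) hindep hmean
    s).trans (Real.sqrt_le_sqrt ?_)
  calc ∑ i ∈ s, ∫ ω, ‖X i ω‖ ^ 2 ∂μ ≤ ∑ _i ∈ s, C ^ 2 := by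
        refine Finset.sum_le_sum fun i _ ↦ ?_
        have h := norm_integral_le_of_norm_le_const (μ := μ) (C := C ^ 2)
          (f := fun ω ↦ ‖X i ω‖ ^ 2) <| by
            filter_upwards [hC i] with ω hω
            simpa using pow_le_pow_left₀ (norm_nonneg _) hω 2
        exact (le_abs_self _).trans (h.trans_eq (by simp))
    _ = s.card * C ^ 2 := by simp

end SecondMoment

-- Cleared of denominators this is `a² - 2 s² ≤ 4 (a - m)²`, which follows from
-- `4 (a - s)² - (a² - 2 s²) = 3 (a - 4 s / 3)² + 2 s² / 3`: the `1/4` is the price paid.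
theorem neg_sq_sub_div_le {a m s : ℝ} (hms : m ≤ s) (hsa : s ≤ a) (hs : 0 < s) :
    -(a - m) ^ 2 / (2 * s ^ 2) ≤ -a ^ 2 / (8 * s ^ 2) + 1 / 4 := by
  rw [div_add' _ _ _ (by positivity), div_le_div_iff₀ (by positivity) (by positivity)]
  nlinarith [sq_nonneg (3 * a - 4 * s), mul_le_mul (sub_le_sub_left hms a)
    (sub_le_sub_left hms a) (by linarith) (by linarith)]

theorem vector_bernstein_general
    {Ω : Type*} [MeasurableSpace Ω] (μ : Measure Ω) [IsProbabilityMeasure μ]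
    (n d : ℕ)
    (x : Fin n → Ω → EuclideanSpace ℝ (Fin d))
    (hmeas : ∀ i, Measurable (x i))
    (hindep : iIndepFun x μ)
    (hmean : ∀ i, ∫ ω, x i ω ∂μ = 0)
    (hbdd : ∀ i, ∀ᵐ ω ∂μ, ‖x i ω‖ ≤ Real.sqrt d)
    (ε : ℝ) (hε0 : 0 < ε) :
    μ {ω | ε ≤ ‖(n : ℝ)⁻¹ • ∑ i, x i ω‖}
      ≤ ENNReal.ofReal (Real.exp (-((n : ℝ) * ε ^ 2) / (8 * d) + 1 / 4)) := by
  by_cases htriv : 0 ≤ -((n : ℝ) * ε ^ 2) / (8 * d) + 1 / 4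
  · exact prob_le_one.trans (by simpa using one_le_exp htriv)
  have hd : (0 : ℝ) < d := Nat.cast_pos.2 <| Nat.pos_of_ne_zero <| by rintro rfl; simp at htriv
  have hlarge : 2 * (d : ℝ) < n * ε ^ 2 := by
    rw [not_le, neg_div, neg_add_lt_iff_lt_add, add_zero, lt_div_iff₀ (by positivity)] at htriv
    linarith
  have hn : (0 : ℝ) < n := pos_of_mul_pos_left (by linarith) (sq_nonneg ε)
  set m := ∫ ω, ‖∑ i, x i ω‖ ∂μ
  set s := √((n : ℝ) * d)
  have hs2 : s ^ 2 = n * d := Real.sq_sqrt (by positivity)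
  have hms : m ≤ s := by
    have h := integral_norm_sum_le_sqrt_card_mul (fun i ↦ (hmeas i).aestronglyMeasurable)
      (fun i j hij ↦ hindep.indepFun hij) hmean hbdd Finset.univ
    rwa [Finset.card_univ, Fintype.card_fin, Real.sq_sqrt (Nat.cast_nonneg d)] at h
  have hsa : s ≤ n * ε := Real.sqrt_le_iff.2 ⟨by positivity, by nlinarith⟩
  have hevent : {ω | ε ≤ ‖(n : ℝ)⁻¹ • ∑ i, x i ω‖}
      = {ω | m + (n * ε - m) ≤ ‖∑ i, x i ω‖} := by
    ext ω
    simp only [Set.mem_ofPred_eq, norm_smul, norm_inv, Real.norm_natCast, add_sub_cancel,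
      le_inv_mul_iff₀ hn]
  have htail := measureReal_norm_sum_ge_le hmeas hindep (R := fun _ ↦ NNReal.sqrt d)
    (by simpa using hbdd) Finset.univ (t := n * ε - m) (by linarith)
  rw [hevent, ← ofReal_measureReal]
  refine ENNReal.ofReal_le_ofReal (htail.trans (exp_le_exp.2 ?_))
  have hrhs : -((n : ℝ) * ε ^ 2) / (8 * d) = -(n * ε) ^ 2 / (8 * s ^ 2) := by
    rw [hs2]
    field_simp
  simpa [hs2, hrhs] using neg_sq_sub_div_le hms hsa (by positivity)

/-- Vector Bernstein inequality (specialized to variance proxy `σ² = d`): for independent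
mean-zero random vectors `x i` in `ℝ^d` with `‖x i‖₂ ≤ √d` a.s., the average
`z = (1/n) ∑ x i` satisfies `Pr{‖z‖₂ ≥ ε} ≤ exp(-n ε²/(8d) + 1/4)` for `0 < ε < √d`. -/
theorem vector_bernstein
    {Ω : Type*} [MeasurableSpace Ω] (μ : Measure Ω) [IsProbabilityMeasure μ]
    (n d : ℕ) (hn : 0 < n) (hd : 0 < d)
    (x : Fin n → Ω → EuclideanSpace ℝ (Fin d))
    (hmeas : ∀ i, Measurable (x i))
    (hindep : iIndepFun x μ)
    (hint : ∀ i, Integrable (x i) μ)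
    (hmean : ∀ i, ∫ ω, x i ω ∂μ = 0)
    (hbdd : ∀ i, ∀ᵐ ω ∂μ, ‖x i ω‖ ≤ Real.sqrt d)
    (ε : ℝ) (hε0 : 0 < ε) (hεd : ε < Real.sqrt d) :
    μ {ω | ε ≤ ‖(n : ℝ)⁻¹ • ∑ i, x i ω‖}
      ≤ ENNReal.ofReal (Real.exp (-((n : ℝ) * ε ^ 2) / (8 * d) + 1 / 4)) :=
  vector_bernstein_general μ n d x hmeas hindep hmean hbdd ε hε0
end
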